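/- Let n be a positive nonsquare integer and a < c positive integers with ac + n = s² for some integer s ≥ 0. If a + c − 2s < 0, then c ≤ n. -/
import Mathlib

theorem stmt19 (n : ℤ) (hn : 0 < n) (hns : ¬ IsSquare n)
    (a c : ℤ) (ha : 0 < a) (hac : a < c)
    (s : ℤ) (hs : 0 ≤ s) (h : a * c + n = s ^ 2)
    (hneg : a + c - 2 * s < 0) : c ≤ n := by
  nlinarith [sq_nonneg (c - s), mul_nonneg (by linarith : (0:ℤ) ≤ c) (by linarith : (0:ℤ) ≤ 2*s - a - c - 1)]
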